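/- arXiv:2106.05780 — 3 statements merged into one kernel-verified Lean document; each statement's English description precedes it below -/
import Mathlib

section
/- With U_T the minimal unitary dilation block matrix of a contraction T on F = H²_{D_{T*}}(𝔻) ⊕ H ⊕ H²_{D_T}(𝔻), one has P_H U_T^n |_H = T^n for all n ∈ ℕ. -/
set_option synthInstance.maxHeartbeats 1000000
set_option maxHeartbeats 1000000
set_option linter.unusedSectionVars false

noncomputable section Hardy

variable (E : Type*) [NormedAddCommGroup E] [InnerProductSpace ℂ E]

/-- The vector-valued Hardy space `H²_E(𝔻)`, modelled as the space of square-summable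
Taylor-coefficient sequences `ℓ²(ℕ, E)`. -/
abbrev HardySpace : Type _ := lp (fun _ : ℕ => E) 2

variable {E}

private lemma two_toReal_pos : (0:ℝ) < (2 : ENNReal).toReal := by norm_num

/-- The right-shifted coefficient sequence (multiplication by `z`). -/
def shiftFun (f : ∀ _ : ℕ, E) : ∀ _ : ℕ, E := fun n => Nat.casesOn n 0 (fun m => f m)

lemma memℓp_shiftFun (f : HardySpace E) : Memℓp (shiftFun (f : ∀ _ : ℕ, E)) 2 := by
  apply memℓp_gen
  have hs : Summable (fun i : ℕ => ‖f i‖ ^ (2 : ENNReal).toReal) :=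
    (lp.memℓp f).summable two_toReal_pos
  exact (summable_nat_add_iff 1).1 hs

/-- The left-shifted coefficient sequence (the adjoint shift `S*`). -/
def shiftAdjFun (f : ∀ _ : ℕ, E) : ∀ _ : ℕ, E := fun n => f (n + 1)

lemma memℓp_shiftAdjFun (f : HardySpace E) : Memℓp (shiftAdjFun (f : ∀ _ : ℕ, E)) 2 := by
  apply memℓp_gen
  have hs : Summable (fun i : ℕ => ‖f i‖ ^ (2 : ENNReal).toReal) :=
    (lp.memℓp f).summable two_toReal_pos
  exact (summable_nat_add_iff 1).2 hs


lemma norm_eq_of_shift (f g : HardySpace E)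
    (hg : (g : ∀ _ : ℕ, E) = shiftFun (f : ∀ _ : ℕ, E)) : ‖g‖ = ‖f‖ := by
  have hs : Summable (fun i : ℕ => ‖f i‖ ^ (2 : ENNReal).toReal) :=
    (lp.memℓp f).summable two_toReal_pos
  have hgs : Summable (fun i : ℕ => ‖g i‖ ^ (2 : ENNReal).toReal) :=
    (lp.memℓp g).summable two_toReal_pos
  rw [lp.norm_eq_tsum_rpow two_toReal_pos, lp.norm_eq_tsum_rpow two_toReal_pos]
  congr 1
  rw [Summable.tsum_eq_zero_add hgs]
  simp [hg, shiftFun, Real.zero_rpow (ne_of_gt two_toReal_pos)]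

/-- The unilateral shift `S` (multiplication by `z`) on the Hardy space, as an isometry. -/
def shiftIsometry : HardySpace E →ₗᵢ[ℂ] HardySpace E where
  toLinearMap :=
    { toFun := fun f => ⟨shiftFun (f : ∀ _ : ℕ, E), memℓp_shiftFun f⟩
      map_add' := by
        intro f g
        apply lp.ext
        funext n
        cases n <;> simp [shiftFun, lp.coeFn_add, Pi.add_apply] <;> first | rfl | (show (0 : E) = 0 + 0; simp)
      map_smul' := by
        intro c f
        apply lp.ext
        funext n
        cases n <;> simp [shiftFun, lp.coeFn_smul, Pi.smul_apply] }
  norm_map' := by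
    intro f
    exact norm_eq_of_shift f _ rfl

/-- The unilateral shift `S` on the Hardy space. -/
def shiftOp : HardySpace E →L[ℂ] HardySpace E := shiftIsometry.toContinuousLinearMap

/-- The backward shift `S*` on the Hardy space. -/
def shiftAdjOp : HardySpace E →L[ℂ] HardySpace E :=
  LinearMap.mkContinuous
    { toFun := fun f => ⟨shiftAdjFun (f : ∀ _ : ℕ, E), memℓp_shiftAdjFun f⟩
      map_add' := by
        intro f g
        apply lp.ext
        funext n
        simp [shiftAdjFun, lp.coeFn_add, Pi.add_apply] <;> rfl
      map_smul' := by
        intro c f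
        apply lp.ext
        funext n
        simp [shiftAdjFun, lp.coeFn_smul, Pi.smul_apply] }
    1 (by
      intro f
      rw [one_mul]
      apply lp.norm_le_of_tsum_le two_toReal_pos (norm_nonneg _)
      have hs : Summable (fun i : ℕ => ‖f i‖ ^ (2 : ENNReal).toReal) :=
        (lp.memℓp f).summable two_toReal_pos
      calc ∑' i : ℕ, ‖shiftAdjFun (f : ∀ _ : ℕ, E) i‖ ^ (2 : ENNReal).toReal
          ≤ ∑' i : ℕ, ‖f i‖ ^ (2 : ENNReal).toReal := by
            rw [Summable.tsum_eq_zero_add hs]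
            exact le_add_of_nonneg_left (Real.rpow_nonneg (norm_nonneg _) _)
        _ = ‖f‖ ^ (2 : ENNReal).toReal := (lp.norm_rpow_eq_tsum two_toReal_pos f).symm)

/-- Evaluation of the zeroth Taylor coefficient, `f ↦ f(0)`. -/
def eval0 : HardySpace E →L[ℂ] E :=
  LinearMap.mkContinuous
    { toFun := fun f => f 0
      map_add' := by intro f g; simp [lp.coeFn_add]
      map_smul' := by intro c f; simp [lp.coeFn_smul] }
    1 (by
      intro f
      rw [one_mul]
      exact lp.norm_apply_le_norm (by norm_num) f 0)

/-- Embedding of `E` as the constant functions in the Hardy space. -/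
def constEmb : E →L[ℂ] HardySpace E :=
  LinearMap.mkContinuous
    { toFun := fun x => lp.single 2 0 x
      map_add' := by
        intro x y
        apply lp.ext
        funext n
        by_cases h : n = 0 <;>
          simp [lp.single_apply, h, lp.coeFn_add, Pi.add_apply]
      map_smul' := by intro c x; simp }
    1 (by
      intro x
      rw [one_mul]
      have := lp.norm_single (E := fun _ : ℕ => E) (by norm_num : (0 : ENNReal) < 2) 0 x
      simpa using this.le)

/-- The orthogonal projection of the Hardy space onto the constant functions. -/
def constProj : HardySpace E →L[ℂ] HardySpace E := constEmb.comp eval0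

end Hardy
section Dilation

variable {H : Type*} [NormedAddCommGroup H] [InnerProductSpace ℂ H] [CompleteSpace H]

/-- The defect operator `D_T = (1 - T*T)^{1/2}` of an operator `T`. -/
noncomputable def defectOp (T : H →L[ℂ] H) : H →L[ℂ] H := CFC.sqrt (1 - star T * T)

/-- The defect space `𝒟_T`, the closure of the range of `D_T`. -/
noncomputable def defectSpace (T : H →L[ℂ] H) : Submodule ℂ H :=
  (LinearMap.range (defectOp T : H →ₗ[ℂ] H)).topologicalClosure

instance (T : H →L[ℂ] H) : CompleteSpace (defectSpace T) :=
  (Submodule.isClosed_topologicalClosure _).completeSpace_coe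

/-- The defect operator, with codomain restricted to the defect space. -/
noncomputable def defectOpRes (T : H →L[ℂ] H) : H →L[ℂ] defectSpace T :=
  (defectOp T).codRestrict (defectSpace T)
    (fun x => Submodule.le_topologicalClosure _ (LinearMap.mem_range_self _ x))

section Blocks

variable {A B C D : Type*} [NormedAddCommGroup A] [NormedAddCommGroup B]
  [NormedAddCommGroup C] [NormedAddCommGroup D]
  [NormedSpace ℂ A] [NormedSpace ℂ B] [NormedSpace ℂ C] [NormedSpace ℂ D]

/-- Pairing of two operators into an `ℓ²`-direct sum. -/
noncomputable def pairL2 (g : A →L[ℂ] C) (h : A →L[ℂ] D) : A →L[ℂ] WithLp 2 (C × D) :=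
  (((WithLp.prodContinuousLinearEquiv 2 ℂ C D).symm :
      (C × D) →L[ℂ] WithLp 2 (C × D))).comp (g.prod h)

/-- A `2 × 2` block operator matrix acting between `ℓ²`-direct sums. -/
noncomputable def block2 (f11 : A →L[ℂ] C) (f12 : B →L[ℂ] C)
    (f21 : A →L[ℂ] D) (f22 : B →L[ℂ] D) : WithLp 2 (A × B) →L[ℂ] WithLp 2 (C × D) :=
  (pairL2 (f11.comp (ContinuousLinearMap.fst ℂ A B) + f12.comp (ContinuousLinearMap.snd ℂ A B))
      (f21.comp (ContinuousLinearMap.fst ℂ A B) +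
        f22.comp (ContinuousLinearMap.snd ℂ A B))).comp
    ((WithLp.prodContinuousLinearEquiv 2 ℂ A B : WithLp 2 (A × B) →L[ℂ] A × B))

end Blocks

variable (T : H →L[ℂ] H)

/-- The dilation space `F = H²_{𝒟_{T*}}(𝔻) ⊕ H ⊕ H²_{𝒟_T}(𝔻)` (with `ℓ²` direct sums). -/
abbrev DilationSpace : Type _ :=
  WithLp 2 (HardySpace (defectSpace (star T)) ×
    WithLp 2 (H × HardySpace (defectSpace T)))

/-- `D_{T*} P_{𝒟_{T*}} : H²_{𝒟_{T*}}(𝔻) → H`. -/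
noncomputable def row21 : HardySpace (defectSpace (star T)) →L[ℂ] H :=
  (defectOp (star T)).comp ((defectSpace (star T)).subtypeL.comp eval0)

/-- `-T* P_{𝒟_{T*}} : H²_{𝒟_{T*}}(𝔻) → H²_{𝒟_T}(𝔻)` (with values the constant functions,
compressed into the defect space `𝒟_T`). -/
noncomputable def row31 : HardySpace (defectSpace (star T)) →L[ℂ] HardySpace (defectSpace T) :=
  constEmb.comp (((defectSpace T).orthogonalProjectionOnto).comp
    ((-(star T)).comp ((defectSpace (star T)).subtypeL.comp eval0)))

/-- `D_T : H → H²_{𝒟_T}(𝔻)`, as constant functions in the defect space. -/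
noncomputable def row32 : H →L[ℂ] HardySpace (defectSpace T) :=
  constEmb.comp (defectOpRes T)

/-- The Schäffer block matrix of the minimal unitary dilation of a contraction `T`:
`[[S*_{𝒟_{T*}}, 0, 0], [D_{T*}P_{𝒟_{T*}}, T, 0], [-T*P_{𝒟_{T*}}, D_T, S_{𝒟_T}]]`. -/
noncomputable def dilationOp : DilationSpace T →L[ℂ] DilationSpace T :=
  block2 shiftAdjOp 0
    (pairL2 (row21 T) (row31 T))
    (block2 T 0 (row32 T) shiftOp)

end Dilation

section Compression

variable {H : Type*} [NormedAddCommGroup H] [InnerProductSpace ℂ H] [CompleteSpace H]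

/-- The isometric embedding of `H` as the middle summand of the dilation space. -/
noncomputable def dilationEmb (T : H →L[ℂ] H) : H →L[ℂ] DilationSpace T :=
  pairL2 0 (pairL2 (ContinuousLinearMap.id ℂ H) 0)

/-- The orthogonal projection of the dilation space onto the middle summand `H`. -/
noncomputable def dilationProj (T : H →L[ℂ] H) : DilationSpace T →L[ℂ] H :=
  (ContinuousLinearMap.fst ℂ H (HardySpace (defectSpace T))).comp
    (((WithLp.prodContinuousLinearEquiv 2 ℂ H (HardySpace (defectSpace T))) :
        WithLp 2 (H × HardySpace (defectSpace T)) →L[ℂ] H × HardySpace (defectSpace T)).comp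
      ((ContinuousLinearMap.snd ℂ (HardySpace (defectSpace (star T)))
          (WithLp 2 (H × HardySpace (defectSpace T)))).comp
        ((WithLp.prodContinuousLinearEquiv 2 ℂ (HardySpace (defectSpace (star T)))
            (WithLp 2 (H × HardySpace (defectSpace T)))) :
          DilationSpace T →L[ℂ]
            HardySpace (defectSpace (star T)) × WithLp 2 (H × HardySpace (defectSpace T)))))

/-! Both `U_T` and its lower right corner `V = [[T, 0], [D_T, S_{𝒟_T}]]` on `H ⊕ H²_{𝒟_T}(𝔻)` are
lower block triangular. Such an operator maps vectors with vanishing first component to vectors of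
the same form, acting there by its lower right corner, and it acts on first components by its
upper left corner. Hence `U_T^n (0, h, 0) = (0, V^n (h, 0))`, whose `H`-component is `T^n h`. -/

section BlockTriangular

variable {A B C D : Type*} [NormedAddCommGroup A] [NormedAddCommGroup B]
  [NormedAddCommGroup C] [NormedAddCommGroup D]
  [NormedSpace ℂ A] [NormedSpace ℂ B] [NormedSpace ℂ C] [NormedSpace ℂ D]

@[simp]
lemma block2_apply (f11 : A →L[ℂ] C) (f12 : B →L[ℂ] C) (f21 : A →L[ℂ] D) (f22 : B →L[ℂ] D)
    (x : WithLp 2 (A × B)) :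
    block2 f11 f12 f21 f22 x = WithLp.toLp 2 (f11 x.fst + f12 x.snd, f21 x.fst + f22 x.snd) :=
  rfl

variable (f : A →L[ℂ] A) (g : A →L[ℂ] B) (k : B →L[ℂ] B)

lemma fst_block2_zero_pow_apply (n : ℕ) (x : WithLp 2 (A × B)) :
    ((block2 f 0 g k ^ n) x).fst = (f ^ n) x.fst := by
  have hsemiconj : Function.Semiconj WithLp.fst (block2 f 0 g k) f := fun x => by simp
  simpa only [FunLike.coe_pow_eq_iterate] using hsemiconj.iterate_right n x

lemma block2_zero_pow_apply_toLp_zero (n : ℕ) (y : B) :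
    (block2 f 0 g k ^ n) (WithLp.toLp 2 (0, y)) = WithLp.toLp 2 (0, (k ^ n) y) := by
  have hsemiconj : Function.Semiconj (fun y : B => WithLp.toLp 2 ((0 : A), y)) k
      (block2 f 0 g k) := fun y => by simp
  simpa only [FunLike.coe_pow_eq_iterate] using (hsemiconj.iterate_right n y).symm

end BlockTriangular

lemma dilationEmb_apply (T : H →L[ℂ] H) (h : H) :
    dilationEmb T h = WithLp.toLp 2 (0, WithLp.toLp 2 (h, 0)) := by
  simp [dilationEmb, pairL2]

lemma dilationProj_apply (T : H →L[ℂ] H) (x : DilationSpace T) :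
    dilationProj T x = x.snd.fst :=
  rfl

theorem dilationOp_compression_pow_general (T : H →L[ℂ] H) (n : ℕ) (h : H) :
    dilationProj T ((dilationOp T ^ n) (dilationEmb T h)) = (T ^ n) h := by
  rw [dilationProj_apply, dilationEmb_apply, dilationOp, block2_zero_pow_apply_toLp_zero,
    WithLp.toLp_snd, fst_block2_zero_pow_apply, WithLp.toLp_fst]

/-- With `U_T` the minimal unitary dilation block matrix of a contraction `T`,
`P_H U_T^n |_H = T^n` for all `n ∈ ℕ`. -/
theorem dilationOp_compression_pow (T : H →L[ℂ] H) (hT : ‖T‖ ≤ 1) (n : ℕ) (h : H) :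
    dilationProj T ((dilationOp T ^ n) (dilationEmb T h)) = (T ^ n) h :=
  dilationOp_compression_pow_general T n h

end Compression
end

section
/- Let U be a unitary operator on a Hilbert space K with U - I in the Schatten n-class B_n(K). If A is the self-adjoint operator with spectrum contained in (-π, π] such that U = e^{iA} (given by the spectral theorem via the principal branch of the logarithm), then A ∈ B_n(K). -/
set_option synthInstance.maxHeartbeats 1000000
set_option maxHeartbeats 1000000

/-- Membership in the Schatten `n`-class `B_n(H)`: the sums `∑_k |⟨T e_k, f_k⟩|^n` over all
pairs of orthonormal systems `(e_k)`, `(f_k)` are uniformly bounded (for `n ≥ 1` this is the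
classical Gohberg–Krein characterization of `‖T‖_n^n < ∞`). -/
def MemSchatten {H : Type*} [NormedAddCommGroup H] [InnerProductSpace ℂ H]
    (n : ℕ) (T : H →L[ℂ] H) : Prop :=
  ∃ C : ℝ, ∀ (e f : ℕ → H), Orthonormal ℂ e → Orthonormal ℂ f →
    ∀ s : Finset ℕ, ∑ k ∈ s, ‖(inner ℂ (T (e k)) (f k) : ℂ)‖ ^ n ≤ C

/-! Because `σ(A) ⊆ (-π, π]`, the only zero of `z ↦ e^{iz} - 1` on `σ(A)` is the simple zero at
`0`, so its difference quotient `φ = dslope (e^{i·}) 0` is continuous and nonvanishing on `σ(A)`.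
Hence `A = φ(A)⁻¹ (U - 1)` by the continuous functional calculus. The Schatten condition is a
left ideal condition: it is stable under sums, scalar multiples and left multiplication by a
unitary `W` (as `⟨W T e, f⟩ = ⟨T e, W* f⟩` and `W*` preserves orthonormality), and every
operator is a linear combination of unitaries. -/

section MemSchatten

variable {H : Type*} [NormedAddCommGroup H] [InnerProductSpace ℂ H] {n : ℕ} {S T : H →L[ℂ] H}

theorem MemSchatten.smul (c : ℂ) (hT : MemSchatten n T) : MemSchatten n (c • T) := by
  obtain ⟨C, hC⟩ := hT
  refine ⟨‖c‖ ^ n * C, fun e f he hf s => ?_⟩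
  simp only [smul_apply, inner_smul_left, norm_mul, Complex.norm_conj, mul_pow, ← Finset.mul_sum]
  exact mul_le_mul_of_nonneg_left (hC e f he hf s) (by positivity)

theorem MemSchatten.add (hS : MemSchatten n S) (hT : MemSchatten n T) :
    MemSchatten n (S + T) := by
  obtain ⟨C, hC⟩ := hS
  obtain ⟨D, hD⟩ := hT
  refine ⟨2 ^ (n - 1) * (C + D), fun e f he hf s => ?_⟩
  calc ∑ k ∈ s, ‖(inner ℂ ((S + T) (e k)) (f k) : ℂ)‖ ^ n
      ≤ ∑ k ∈ s, 2 ^ (n - 1) *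
          (‖(inner ℂ (S (e k)) (f k) : ℂ)‖ ^ n + ‖(inner ℂ (T (e k)) (f k) : ℂ)‖ ^ n) := by
        gcongr with k
        rw [add_apply, inner_add_left]
        exact (pow_le_pow_left₀ (norm_nonneg _) (norm_add_le _ _) n).trans
          (add_pow_le (norm_nonneg _) (norm_nonneg _) n)
    _ ≤ 2 ^ (n - 1) * (C + D) := by
        rw [← Finset.mul_sum, Finset.sum_add_distrib]
        gcongr
        exacts [hC e f he hf s, hD e f he hf s]

variable [CompleteSpace H]

theorem MemSchatten.unitary_mul {W : H →L[ℂ] H} (hW : W ∈ unitary (H →L[ℂ] H))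
    (hT : MemSchatten n T) : MemSchatten n (W * T) := by
  obtain ⟨C, hC⟩ := hT
  refine ⟨C, fun e f he hf s => ?_⟩
  have hWf : Orthonormal ℂ (fun k => star W (f k)) :=
    hf.comp_linearIsometryEquiv (Unitary.linearIsometryEquiv (star ⟨W, hW⟩))
  simpa only [mul_apply_eq_comp, ContinuousLinearMap.comp_apply,
    ContinuousLinearMap.star_eq_adjoint, ContinuousLinearMap.adjoint_inner_right]
    using hC e _ he hWf s

theorem MemSchatten.mul_left (B : H →L[ℂ] H) (hT : MemSchatten n T) :
    MemSchatten n (B * T) := by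
  have hB : B ∈ Submodule.span ℂ (unitary (H →L[ℂ] H) : Set (H →L[ℂ] H)) := by
    simp [CStarAlgebra.span_unitary]
  induction hB using Submodule.span_induction with
  | mem W hW => exact hT.unitary_mul hW
  | zero => simpa using hT.smul 0
  | add B₁ B₂ _ _ h₁ h₂ => simpa only [add_mul] using h₁.add h₂
  | smul c B _ h => simpa only [smul_mul_assoc] using h.smul c

end MemSchatten

section FunctionalCalculus

open Complex

variable {A : Type*} [CStarAlgebra A] {a : A}

theorem cfc_exp_I_mul (ha : IsStarNormal a) :
    cfc (fun z => exp (I * z)) a = NormedSpace.exp (I • a) := by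
  rw [← CFC.complex_exp_eq_normedSpace_exp, ← cfc_comp_smul I exp a]
  rfl

theorem dslope_exp_I_mul_zero_ne_zero {z : ℂ} (hz : z ≠ 0 → exp (I * z) ≠ 1) :
    dslope (fun z => exp (I * z)) 0 z ≠ 0 := by
  rcases eq_or_ne z 0 with rfl | hz0
  · rw [dslope_same, (((hasDerivAt_id' 0).const_mul I).cexp).deriv]
    simp
  · intro h0
    have := sub_smul_dslope (fun z => exp (I * z)) 0 z
    rw [h0, smul_zero, eq_comm, sub_eq_zero, mul_zero, exp_zero] at this
    exact hz hz0 this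

theorem exists_mul_exp_I_smul_sub_one_eq (ha : IsStarNormal a)
    (h : ∀ z ∈ spectrum ℂ a, z ≠ 0 → exp (I * z) ≠ 1) :
    ∃ b : A, b * (NormedSpace.exp (I • a) - 1) = a := by
  have hφ : Continuous (dslope (fun z => exp (I * z)) 0) := by
    rw [← continuousOn_univ, continuousOn_dslope Filter.univ_mem]
    exact ⟨by fun_prop, by fun_prop⟩
  have hφ_ne z (hz : z ∈ spectrum ℂ a) := dslope_exp_I_mul_zero_ne_zero (h z hz)
  have hsub : NormedSpace.exp (I • a) - 1 =
      cfc (fun z => z * dslope (fun z => exp (I * z)) 0 z) a := by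
    rw [← cfc_exp_I_mul ha, ← cfc_one ℂ a, ← cfc_sub _ _]
    refine cfc_congr fun z _ => ?_
    simpa using (sub_smul_dslope (fun z => exp (I * z)) 0 z).symm
  refine ⟨cfc (fun z => (dslope (fun z => exp (I * z)) 0 z)⁻¹) a, ?_⟩
  rw [hsub, ← cfc_mul (fun z => (dslope (fun z => exp (I * z)) 0 z)⁻¹) _ a
    (hφ.continuousOn.inv₀ hφ_ne) (by fun_prop)]
  conv_rhs => rw [← cfc_id' ℂ a]
  refine cfc_congr fun z hz => ?_
  field_simp [hφ_ne z hz]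

end FunctionalCalculus

open Complex Real in
theorem exp_I_mul_ofReal_ne_one {x : ℝ} (hx : x ∈ Set.Ioc (-π) π) (hx0 : x ≠ 0) :
    exp (I * x) ≠ 1 := by
  intro h
  have harg := arg_cos_add_sin_mul_I hx
  rw [← exp_mul_I, mul_comm, h, arg_one] at harg
  exact hx0 harg.symm

open Real in
theorem log_unitary_memSchatten_general {K : Type*} [NormedAddCommGroup K] [InnerProductSpace ℂ K]
    [CompleteSpace K] (n : ℕ) (U A : K →L[ℂ] K)
    (hUn : MemSchatten n (U - 1))
    (hA : IsSelfAdjoint A) (hspec : spectrum ℝ A ⊆ Set.Ioc (-π) π)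
    (hexp : NormedSpace.exp (Complex.I • A) = U) :
    MemSchatten n A := by
  have hA_exp_ne_one : ∀ z ∈ spectrum ℂ A, z ≠ 0 → Complex.exp (Complex.I * z) ≠ 1 := by
    intro z hz hz0
    obtain ⟨x, rfl⟩ : ∃ x : ℝ, (x : ℂ) = z := ⟨z.re, (hA.mem_spectrum_eq_re hz).symm⟩
    exact exp_I_mul_ofReal_ne_one (hspec ((spectrum.algebraMap_mem_iff ℂ).mp hz))
      (Complex.ofReal_ne_zero.mp hz0)
  obtain ⟨B, hB⟩ := exists_mul_exp_I_smul_sub_one_eq hA.isStarNormal hA_exp_ne_one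
  rw [← hB, hexp]
  exact hUn.mul_left B

open Real in
/-- Let `U` be unitary on `K` with `U - I ∈ B_n(K)`. If `A` is the self-adjoint operator with
spectrum in `(-π, π]` such that `U = e^{iA}`, then `A ∈ B_n(K)`. -/
theorem log_unitary_memSchatten {K : Type*} [NormedAddCommGroup K] [InnerProductSpace ℂ K]
    [CompleteSpace K] (n : ℕ) (U A : K →L[ℂ] K)
    (hU : U ∈ unitary (K →L[ℂ] K)) (hUn : MemSchatten n (U - 1))
    (hA : IsSelfAdjoint A) (hspec : spectrum ℝ A ⊆ Set.Ioc (-π) π)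
    (hexp : NormedSpace.exp (Complex.I • A) = U) :
    MemSchatten n A :=
  log_unitary_memSchatten_general n U A hUn hA hspec hexp
end

section
/- In the recursion p_{0,1} = 1, p_{0,q}(λ) = (-1/2)(1+λ²)p_{0,q-1}(λ), p_{k,q}(λ) = (-1/2)[(1+λ²)(p_{k,q-1} + p'_{k-1,q-1})(λ) + 2λ p_{k-1,q-1}(λ)] for 1 ≤ k ≤ q-2, and p_{q-1,q}(λ) = (-1/2)[(1+λ²)p'_{q-2,q-1}(λ) + 2λ p_{q-2,q-1}(λ)], the polynomial p_{k,q} has degree exactly 2(q-1) - k for all 0 ≤ k ≤ q-1. -/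
set_option synthInstance.maxHeartbeats 1000000
set_option maxHeartbeats 1000000

open Polynomial in
/-- The polynomials `p_{k,q}` from the Cayley change of variables: `p_{0,1} = 1`,
`p_{0,q} = -(1/2)(1+λ²) p_{0,q-1}`,
`p_{k,q} = -(1/2)[(1+λ²)(p_{k,q-1} + p'_{k-1,q-1}) + 2λ p_{k-1,q-1}]` for `1 ≤ k ≤ q-2`, and
`p_{q-1,q} = -(1/2)[(1+λ²) p'_{q-2,q-1} + 2λ p_{q-2,q-1}]`
(with the convention `p_{k,q} = 0` for `k ≥ q`, which subsumes the last case). -/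
noncomputable def cayleyPoly : ℕ → ℕ → Polynomial ℝ
  | _, 0 => 0
  | k, 1 => if k = 0 then 1 else 0
  | 0, (q+2) => C (-(1/2)) * ((1 + X ^ 2) * cayleyPoly 0 (q+1))
  | (k+1), (q+2) => C (-(1/2)) *
      ((1 + X ^ 2) * (cayleyPoly (k+1) (q+1) + derivative (cayleyPoly k (q+1)))
        + C 2 * X * cayleyPoly k (q+1))

/-!
With `Q = 1 + λ²`, the product rule turns the recursion into
`p_{k,q+1} = -(1/2) (Q p_{k,q} + (Q p_{k-1,q})')`. Multiplying by `Q` raises the degree by two and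
`(Q ·)'` raises it by one, so `deg p_{k,q} ≤ 2(q-1) - k` by induction. In degree `2q - k` the two
terms contribute the top coefficient of `p_{k,q}` and `2q - k + 1` times that of `p_{k-1,q}`;
inductively the top coefficients of all `p_{k,q}` have the sign `(-1)^(q-1)`, so they never cancel.
-/

open Polynomial

section OneAddXSq

variable {R : Type*} [CommSemiring R]

lemma coeff_one_add_X_sq_mul (p : R[X]) (n : ℕ) :
    ((1 + X ^ 2) * p).coeff (n + 2) = p.coeff (n + 2) + p.coeff n := by
  rw [add_mul, one_mul, coeff_add, coeff_X_pow_mul]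

lemma natDegree_one_add_X_sq_mul_le {p : R[X]} {n : ℕ} (hp : p.natDegree ≤ n) :
    ((1 + X ^ 2) * p).natDegree ≤ n + 2 := by
  rw [add_comm n]
  refine natDegree_mul_le_of_le ?_ hp
  compute_degree

lemma coeff_one_add_X_sq_mul_of_natDegree_le {p : R[X]} {n : ℕ} (hp : p.natDegree ≤ n) :
    ((1 + X ^ 2) * p).coeff (n + 2) = p.coeff n := by
  rw [coeff_one_add_X_sq_mul, coeff_eq_zero_of_natDegree_lt (by omega), zero_add]

lemma natDegree_derivative_one_add_X_sq_mul_le {p : R[X]} {n : ℕ} (hp : p.natDegree ≤ n) :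
    (derivative ((1 + X ^ 2) * p)).natDegree ≤ n + 1 :=
  (natDegree_derivative_le _).trans (by have := natDegree_one_add_X_sq_mul_le hp; omega)

lemma coeff_derivative_one_add_X_sq_mul {p : R[X]} {n : ℕ} (hp : p.natDegree ≤ n) :
    (derivative ((1 + X ^ 2) * p)).coeff (n + 1) = p.coeff n * (n + 2) := by
  rw [coeff_derivative, coeff_one_add_X_sq_mul_of_natDegree_le hp]
  push_cast
  ring

end OneAddXSq

lemma cayleyPoly_eq_zero_of_le {k q : ℕ} (h : q ≤ k) : cayleyPoly k q = 0 := by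
  induction q generalizing k with
  | zero => simp [cayleyPoly]
  | succ q ih =>
    obtain ⟨k, rfl⟩ : ∃ j, k = j + 1 := ⟨k - 1, by omega⟩
    cases q with
    | zero => simp [cayleyPoly]
    | succ q => simp [cayleyPoly, ih (k := k + 1) (by omega), ih (k := k) (by omega)]

lemma cayleyPoly_succ_add_two (k m : ℕ) :
    cayleyPoly (k + 1) (m + 2) = C (-(1/2)) *
      ((1 + X ^ 2) * cayleyPoly (k + 1) (m + 1) + derivative ((1 + X ^ 2) * cayleyPoly k (m + 1))) := by
  rw [cayleyPoly, derivative_mul]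
  congr 1
  simp only [derivative_add, derivative_one, derivative_X_pow, Nat.cast_ofNat, zero_add]
  ring

lemma natDegree_le_and_sign_coeff_neg_half_mul_add_derivative {A B : ℝ[X]} {d : ℕ} {s : ℝ}
    (hA : A.natDegree ≤ d + 1) (hAs : 0 ≤ s * A.coeff (d + 1))
    (hB : B.natDegree ≤ d) (hBs : 0 < s * B.coeff d) :
    let P := C (-(1/2)) * (A + derivative ((1 + X ^ 2) * B))
    P.natDegree ≤ d + 1 ∧ 0 < -s * P.coeff (d + 1) := by
  refine ⟨natDegree_C_mul_le _ _ |>.trans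
    (natDegree_add_le_of_degree_le hA (natDegree_derivative_one_add_X_sq_mul_le hB)), ?_⟩
  rw [coeff_C_mul, coeff_add, coeff_derivative_one_add_X_sq_mul hB]
  have hBs' : 0 < s * B.coeff d * (d + 2) := mul_pos hBs (by positivity)
  linarith

lemma cayleyPoly_natDegree_le_and_sign_coeff (m k : ℕ) (hk : k ≤ m) :
    (cayleyPoly k (m + 1)).natDegree ≤ 2 * m - k ∧
      0 < (-1) ^ m * (cayleyPoly k (m + 1)).coeff (2 * m - k) := by
  induction m generalizing k with
  | zero =>
    obtain rfl : k = 0 := by omega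
    simp [cayleyPoly]
  | succ m ih =>
    rw [pow_succ, mul_neg_one]
    cases k with
    | zero =>
      obtain ⟨hdeg, hsign⟩ := ih 0 (Nat.zero_le m)
      rw [Nat.sub_zero] at hdeg hsign ⊢
      rw [cayleyPoly, show 2 * (m + 1) = 2 * m + 2 by ring]
      refine ⟨natDegree_C_mul_le _ _ |>.trans (natDegree_one_add_X_sq_mul_le hdeg), ?_⟩
      rw [coeff_C_mul, coeff_one_add_X_sq_mul_of_natDegree_le hdeg]
      linarith
    | succ j =>
      have hA : ((1 + X ^ 2) * cayleyPoly (j + 1) (m + 1)).natDegree ≤ 2 * m - j + 1 ∧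
          0 ≤ (-1) ^ m * ((1 + X ^ 2) * cayleyPoly (j + 1) (m + 1)).coeff (2 * m - j + 1) := by
        rcases Nat.lt_or_ge j m with hj | hj
        · obtain ⟨hAdeg, hAsign⟩ := ih (j + 1) hj
          rw [show 2 * m - j + 1 = 2 * m - (j + 1) + 2 by omega,
            coeff_one_add_X_sq_mul_of_natDegree_le hAdeg]
          exact ⟨natDegree_one_add_X_sq_mul_le hAdeg, hAsign.le⟩
        · simp [cayleyPoly_eq_zero_of_le (show m + 1 ≤ j + 1 by omega)]
      obtain ⟨hBdeg, hBsign⟩ := ih j (by omega)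
      rw [cayleyPoly_succ_add_two, show 2 * (m + 1) - (j + 1) = 2 * m - j + 1 by omega]
      exact natDegree_le_and_sign_coeff_neg_half_mul_add_derivative hA.1 hA.2 hBdeg hBsign

/-- In the recursion defining `p_{k,q}`, the polynomial `p_{k,q}` has degree exactly
`2(q-1) - k` for all `0 ≤ k ≤ q-1`. -/
theorem cayleyPoly_natDegree (q k : ℕ) (hq : 1 ≤ q) (hk : k ≤ q - 1) :
    cayleyPoly k q ≠ 0 ∧ (cayleyPoly k q).natDegree = 2 * (q - 1) - k := by
  obtain ⟨m, rfl⟩ : ∃ m, q = m + 1 := ⟨q - 1, by omega⟩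
  obtain ⟨hdeg, hsign⟩ := cayleyPoly_natDegree_le_and_sign_coeff m k (by omega)
  have hcoeff : (cayleyPoly k (m + 1)).coeff (2 * m - k) ≠ 0 := right_ne_zero_of_mul hsign.ne'
  refine ⟨fun h => hcoeff (by rw [h, coeff_zero]), ?_⟩
  simpa using natDegree_eq_of_le_of_coeff_ne_zero hdeg hcoeff
end
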